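/- arXiv:math/0209218 — 2 statements merged into one kernel-verified Lean document; each statement's English description precedes it below -/
import Mathlib

section
/- Let n ≥ 1 and let N ≡ 2 (mod 4) with N ≥ 6. Then Σ_{μ∈X_N} q^{(μ,μ+2ρ)} = 2^n · Σ_{μ∈X_{N/2}} q^{(μ,μ+2ρ)}, where both exponentials are taken with q^r = exp(2πi r/N). In particular Σ_{μ∈X_{N/2}} q^{(μ,μ+2ρ)} ≠ 0. -/
open Complex Finset

/-- `qp N r = exp(2πi r / N)`, i.e. `q^r` for `q = exp(2πi/N)`. -/
noncomputable def qp (N : ℕ) (r : ℚ) : ℂ :=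
  Complex.exp (2 * (Real.pi : ℂ) * Complex.I * (r : ℂ) / (N : ℂ))

/-- The Weyl vector of `osp(1|2n)`: `ρ_j = n - j + 1/2` for `j = 1, …, n`
(0-indexed: `ρ j = n - j - 1/2`). -/
def rhoV (n : ℕ) : Fin n → ℚ := fun j => (n : ℚ) - (j : ℚ) - 1/2

/-- The standard dot product on `ℚ^n`. -/
def dotp {n : ℕ} (x y : Fin n → ℚ) : ℚ := ∑ j, x j * y j

/-- Coercion of an integer vector to a rational vector. -/
def intC {n : ℕ} (lam : Fin n → ℤ) : Fin n → ℚ := fun j => (lam j : ℚ)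

/-- Coercion of an element of `X_M = {0,…,M-1}^n` to a rational vector. -/
def finC {n M : ℕ} (mu : Fin n → Fin M) : Fin n → ℚ := fun j => ((mu j : ℕ) : ℚ)

/-- The `j`-th standard basis vector of `ℚ^n`. -/
def stdB (n : ℕ) (j : Fin n) : Fin n → ℚ := fun l => if l = j then 1 else 0

/-- The hyperoctahedral group (Weyl group of `osp(1|2n)`): a permutation with signs. -/
abbrev HypOct (n : ℕ) := Equiv.Perm (Fin n) × (Fin n → ℤˣ)

/-- Action of the hyperoctahedral group on `ℚ^n` by signed permutation of coordinates. -/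
def Wact {n : ℕ} (σ : HypOct n) (x : Fin n → ℚ) : Fin n → ℚ :=
  fun j => ((σ.2 j : ℤ) : ℚ) * x (σ.1⁻¹ j)

/-- `ε'(σ) = sgn(π) · ∏_j s_j` for `σ = (π, s)`. -/
def epsW {n : ℕ} (σ : HypOct n) : ℤˣ :=
  Equiv.Perm.sign σ.1 * ∏ j, σ.2 j

/-- `S'_{λ,μ} = Σ_{σ∈W} ε'(σ) q^{2(λ+ρ, σ(μ+ρ))}` (for rational vectors `λ, μ`). -/
noncomputable def Sprime (n N : ℕ) (lam mu : Fin n → ℚ) : ℂ :=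
  ∑ σ : HypOct n,
    ((epsW σ : ℤ) : ℂ) * qp N (2 * dotp (lam + rhoV n) (Wact σ (mu + rhoV n)))

/-- `Q_μ = Σ_{σ∈W} ε'(σ) q^{2(ρ, σ(μ+ρ))}`. -/
noncomputable def Qmu (n N : ℕ) (mu : Fin n → ℤ) : ℂ :=
  ∑ σ : HypOct n,
    ((epsW σ : ℤ) : ℂ) * qp N (2 * dotp (rhoV n) (Wact σ (intC mu + rhoV n)))

/-- Gauss sum `G(N,m) = Σ_{j=0}^{N-1} q^{j(j+m)}` with `q = exp(2πi/N)`. -/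
noncomputable def GaussG (N : ℕ) (m : ℤ) : ℂ :=
  ∑ j : Fin N, qp N ((j : ℚ) * ((j : ℚ) + (m : ℚ)))

/-- `Σ_{μ ∈ X_M} q^{(μ, μ+2ρ)}` where `q = exp(2πi/N)`. -/
noncomputable def sumX (n N M : ℕ) : ℂ :=
  ∑ mu : Fin n → Fin M, qp N (dotp (finC mu) (finC mu + 2 • rhoV n))

/-- `Σ_{λ ∈ X_M} q^{(λ,λ)} S'_{λ,μ}` where `q = exp(2πi/N)`. -/
noncomputable def sumXS (n N M : ℕ) (mu : Fin n → ℤ) : ℂ :=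
  ∑ lam : Fin n → Fin M, qp N (dotp (finC lam) (finC lam)) * Sprime n N (finC lam) (intC mu)

/-! The sum over `X_M` factors over the coordinates into one-variable sums
`Σ_{k<M} q^{k(k+m)}` with `m = 2ρ_j` odd. For `N = 2K` with `K` odd, `K + m` is even, so the
shift `k ↦ k + K` preserves `q^{k(k+m)}` and the sum over `k < N` is twice the sum over `k < K`.
The full sum `G` does not vanish: in `ZMod N`, substituting `x = y + d` in `G · Σ_y q^{-y(y+m)}`
and applying orthogonality to the character `y ↦ q^{2dy}` leaves `N` times a sum over the two
solutions `d ∈ {0, K}` of `2d = 0`, both contributing `1`, so the product is `2N`. -/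

lemma qp_sum {ι : Type*} (N : ℕ) (s : Finset ι) (f : ι → ℚ) :
    qp N (∑ i ∈ s, f i) = ∏ i ∈ s, qp N (f i) := by
  simp only [qp, Rat.cast_sum, mul_sum, sum_div, exp_sum]

lemma qp_intCast (N : ℕ) [NeZero N] (a : ℤ) : qp N a = ZMod.stdAddChar (N := N) a := by
  rw [qp, ZMod.stdAddChar_coe, Rat.cast_intCast]

lemma qp_natCast_mul_add (N : ℕ) [NeZero N] (k : ℕ) (m : ℤ) :
    qp N ((k : ℚ) * ((k : ℚ) + m)) = ZMod.stdAddChar (N := N) (k * (k + m)) := by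
  have h := qp_intCast N ((k : ℤ) * (k + m))
  push_cast at h
  exact h

theorem AddChar.sum_mul_add_mul_sum_neg {R R' : Type*} [CommRing R] [Fintype R] [DecidableEq R]
    [CommRing R'] [IsDomain R'] {ψ : AddChar R R'} (hψ : ψ.IsPrimitive) (a : R) :
    (∑ x, ψ (x * (x + a))) * ∑ y, ψ (-(y * (y + a))) =
      Fintype.card R * ∑ d with 2 * d = 0, ψ (d * (d + a)) := by
  -- substituting `x = d + y` makes the cross term a character in `y`
  have hshift (y d : R) : ψ ((d + y) * (d + y + a)) * ψ (-(y * (y + a))) =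
      ψ (d * (d + a)) * ψ (y * (2 * d)) := by
    rw [← AddChar.map_add_eq_mul, ← AddChar.map_add_eq_mul]
    ring_nf
  calc (∑ x, ψ (x * (x + a))) * ∑ y, ψ (-(y * (y + a)))
      = ∑ y, ∑ d, ψ (d * (d + a)) * ψ (y * (2 * d)) := by
        rw [sum_mul_sum, sum_comm]
        refine sum_congr rfl fun y _ => ?_
        rw [← Equiv.sum_comp (Equiv.addRight y)]
        exact sum_congr rfl fun d _ => hshift y d
    _ = ∑ d, ψ (d * (d + a)) * if 2 * d = 0 then (Fintype.card R : R') else 0 := by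
        rw [sum_comm]
        simp only [← mul_sum, AddChar.sum_mulShift _ hψ, Nat.cast_ite, Nat.cast_zero]
    _ = Fintype.card R * ∑ d with 2 * d = 0, ψ (d * (d + a)) := by
        rw [sum_filter, mul_sum]
        refine sum_congr rfl fun d _ => ?_
        split_ifs <;> ring

lemma ZMod.two_mul_eq_zero_iff {K : ℕ} [NeZero K] {d : ZMod (2 * K)} :
    2 * d = 0 ↔ d = 0 ∨ d = K := by
  constructor
  · intro h
    rw [← ZMod.natCast_zmod_val d] at h ⊢
    have hlt : d.val < 2 * K := ZMod.val_lt d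
    obtain ⟨c, hc⟩ : K ∣ d.val := by
      refine Nat.dvd_of_mul_dvd_mul_left two_pos ((ZMod.natCast_eq_zero_iff _ _).1 ?_)
      exact_mod_cast h
    have hc2 : c < 2 := by nlinarith [NeZero.pos K]
    interval_cases c <;> simp [hc]
  · rintro (rfl | rfl)
    · exact mul_zero 2
    · exact_mod_cast ZMod.natCast_self (2 * K)

lemma ZMod.natCast_mul_add_eq_zero_of_odd {K : ℕ} (hK : Odd K) {m : ℤ} (hm : Odd m) :
    (K : ZMod (2 * K)) * (K + m) = 0 := by
  obtain ⟨t, ht⟩ : Even ((K : ℤ) + m) := (Int.odd_coe_nat K |>.2 hK).add_odd hm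
  have h := (ZMod.intCast_zmod_eq_zero_iff_dvd (K * (K + m)) (2 * K)).2
    ⟨t, by push_cast; linear_combination (K : ℤ) * ht⟩
  push_cast at h
  exact h

noncomputable def partialGaussG (N M : ℕ) (m : ℤ) : ℂ :=
  ∑ k : Fin M, qp N ((k : ℚ) * ((k : ℚ) + (m : ℚ)))

lemma partialGaussG_self (N : ℕ) : partialGaussG N N = GaussG N := rfl

lemma GaussG_eq_sum_zmod (N : ℕ) [NeZero N] (m : ℤ) :
    GaussG N m = ∑ x : ZMod N, ZMod.stdAddChar (x * (x + (m : ZMod N))) := by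
  have hbij : Function.Bijective (fun i : Fin N => ((i : ℕ) : ZMod N)) := by
    refine (Fintype.bijective_iff_injective_and_card _).2 ⟨fun i j hij => ?_, by simp⟩
    have := congrArg ZMod.val hij
    simp only [ZMod.val_cast_of_lt i.isLt, ZMod.val_cast_of_lt j.isLt] at this
    exact Fin.ext this
  simp only [GaussG, qp_natCast_mul_add]
  exact Fintype.sum_bijective _ hbij _ _ fun i => rfl

lemma GaussG_eq_two_mul_partialGaussG {K : ℕ} (hK : Odd K) {m : ℤ} (hm : Odd m) :
    GaussG (2 * K) m = 2 * partialGaussG (2 * K) K m := by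
  have : NeZero K := ⟨hK.pos.ne'⟩
  have hperiod (k : ℕ) : qp (2 * K) (((K + k : ℕ) : ℚ) * (((K + k : ℕ) : ℚ) + m)) =
      qp (2 * K) ((k : ℚ) * ((k : ℚ) + m)) := by
    have h2K : ((2 * K : ℕ) : ZMod (2 * K)) = 0 := ZMod.natCast_self _
    rw [qp_natCast_mul_add, qp_natCast_mul_add]
    push_cast at h2K ⊢
    congr 1
    linear_combination ZMod.natCast_mul_add_eq_zero_of_odd hK hm + (k : ZMod (2 * K)) * h2K
  have hsplit := sum_range_add (fun k => qp (2 * K) ((k : ℚ) * ((k : ℚ) + m))) K K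
  rw [← two_mul, sum_congr rfl fun k _ => hperiod k] at hsplit
  rw [← partialGaussG_self, partialGaussG, partialGaussG,
    Fin.sum_univ_eq_sum_range (fun k => qp (2 * K) ((k : ℚ) * ((k : ℚ) + m))),
    Fin.sum_univ_eq_sum_range (fun k => qp (2 * K) ((k : ℚ) * ((k : ℚ) + m))), hsplit]
  ring

lemma GaussG_ne_zero {K : ℕ} (hK : Odd K) {m : ℤ} (hm : Odd m) : GaussG (2 * K) m ≠ 0 := by
  have : NeZero K := ⟨hK.pos.ne'⟩
  have hK0 : (K : ZMod (2 * K)) ≠ 0 := by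
    rw [Ne, ZMod.natCast_eq_zero_iff]
    exact Nat.not_dvd_of_pos_of_lt hK.pos (by linarith [hK.pos])
  have hkernel : ({d | 2 * d = 0} : Finset (ZMod (2 * K))) = {0, (K : ZMod (2 * K))} := by
    ext d
    simp [ZMod.two_mul_eq_zero_iff]
  have hprod :=
    AddChar.sum_mul_add_mul_sum_neg (ZMod.isPrimitive_stdAddChar (2 * K)) (m : ZMod (2 * K))
  rw [hkernel, sum_pair hK0.symm, ZMod.natCast_mul_add_eq_zero_of_odd hK hm, zero_mul,
    AddChar.map_zero_eq_one, ZMod.card] at hprod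
  rw [GaussG_eq_sum_zmod]
  intro h
  rw [h, zero_mul] at hprod
  norm_num at hprod
  exact hK.pos.ne' hprod

lemma two_mul_rhoV (n : ℕ) (j : Fin n) :
    2 * rhoV n j = ((2 * ((n : ℤ) - j) - 1 : ℤ) : ℚ) := by
  rw [rhoV]
  push_cast
  ring

lemma sumX_eq_prod_partialGaussG (n N M : ℕ) :
    sumX n N M = ∏ j : Fin n, partialGaussG N M (2 * ((n : ℤ) - j) - 1) := by
  simp only [partialGaussG, Fintype.prod_sum, sumX, dotp, finC, qp_sum, Pi.add_apply,
    nsmul_eq_mul, Nat.cast_ofNat, Pi.mul_apply, Pi.ofNat_apply, two_mul_rhoV]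

theorem sumX_halving_general (n N : ℕ) (hN4 : N % 4 = 2) :
    sumX n N N = 2 ^ n * sumX n N (N / 2) ∧ sumX n N (N / 2) ≠ 0 := by
  obtain ⟨K, rfl, hK⟩ : ∃ K, N = 2 * K ∧ Odd K :=
    ⟨N / 2, by omega, Nat.odd_iff.2 (by omega)⟩
  have hm (j : Fin n) : Odd (2 * ((n : ℤ) - j) - 1) := ⟨(n : ℤ) - j - 1, by ring⟩
  rw [Nat.mul_div_cancel_left K two_pos, sumX_eq_prod_partialGaussG,
    sumX_eq_prod_partialGaussG, partialGaussG_self]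
  refine ⟨?_, prod_ne_zero_iff.2 fun j _ => ?_⟩
  · simp only [GaussG_eq_two_mul_partialGaussG hK (hm _), prod_mul_distrib, prod_const,
      card_univ, Fintype.card_fin]
  · exact right_ne_zero_of_mul
      (GaussG_eq_two_mul_partialGaussG hK (hm j) ▸ GaussG_ne_zero hK (hm j))

/-- For `n ≥ 1` and `N ≡ 2 (mod 4)`, `N ≥ 6`,
`Σ_{μ∈X_N} q^{(μ,μ+2ρ)} = 2^n · Σ_{μ∈X_{N/2}} q^{(μ,μ+2ρ)}` (both with
`q^r = exp(2πi r/N)`), and the sum over `X_{N/2}` is nonzero. -/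
theorem sumX_halving (n N : ℕ) (hn : 1 ≤ n) (hN : 6 ≤ N) (hN4 : N % 4 = 2) :
    sumX n N N = 2 ^ n * sumX n N (N / 2) ∧ sumX n N (N / 2) ≠ 0 :=
  sumX_halving_general n N hN4
end

section
/- Let n ≥ 1, let N ≡ 2 (mod 4) with N ≥ 6, and let μ ∈ ℤ^n. Then Σ_{λ∈X_N} q^{(λ,λ)} S'_{λ,μ} = 2^n · Σ_{λ∈X_{N/2}} q^{(λ,λ)} S'_{λ,μ}, where throughout q^r = exp(2πi r/N). -/
open Complex Finset

/-! Write `N = 2K` with `K` odd. Each summand `q^{(λ,λ)} S'_{λ,μ}` is `K`-periodic in every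
coordinate of `λ`: shifting `λ` by `K c` changes the exponent of the `σ`-term by
`Σ_j (2K λ_j c_j + K c_j (K c_j + w_j))` with `w_j = 2 (σ(μ+ρ))_j` odd, so `c_j (K c_j + w_j)` is
even and the change is a multiple of `N`. Hence `X_N` splits into `2^n` translates of `X_K`, on each
of which the sum is the same. -/

lemma Int.two_dvd_mul_mul_add_of_odd {K w : ℤ} (hK : Odd K) (hw : Odd w) (c : ℤ) :
    2 ∣ c * (K * c + w) := by
  rw [← even_iff_two_dvd, Int.even_mul, Int.even_add', Int.odd_mul]
  rcases Int.even_or_odd c with hc | hc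
  · exact .inl hc
  · exact .inr (by simp [hK, hc, hw])

lemma Fintype.sum_pi_fin_mul_eq_pow_smul {M : Type*} [AddCommMonoid M] {n : ℕ} (m K : ℕ)
    (g : (Fin n → ℤ) → M) (hg : ∀ x c, g (x + (K : ℤ) • c) = g x) :
    ∑ x : Fin n → Fin (m * K), g (fun j => x j)
      = m ^ n • ∑ x : Fin n → Fin K, g (fun j => x j) := by
  let e : (Fin n → Fin m) × (Fin n → Fin K) ≃ (Fin n → Fin (m * K)) :=
    (Equiv.arrowProdEquivProdArrow _ _ _).symm.trans (Equiv.piCongrRight fun _ => finProdFinEquiv)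
  have he : ∀ a b, g (fun j => e (a, b) j) = g (fun j => b j) := fun a b => by
    convert hg (fun j => b j) (fun j => a j) using 2
    funext j
    simp [e, finProdFinEquiv]
  rw [← e.sum_comp, Fintype.sum_prod_type]
  simp only [he, sum_const, card_univ, Fintype.card_pi, Fintype.card_fin, prod_const]

lemma qp_add (N : ℕ) (r s : ℚ) : qp N (r + s) = qp N r * qp N s := by
  rw [qp, qp, qp, ← Complex.exp_add]
  congr 1
  push_cast
  ring

lemma qp_eq_of_eq_add_natCast_mul {N : ℕ} (hN : N ≠ 0) {r s : ℚ} (t : ℤ) (h : r = s + N * t) :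
    qp N r = qp N s := by
  have h_one : qp N (N * t) = 1 := by
    rw [qp, ← Complex.exp_int_mul_two_pi_mul_I t]
    congr 1
    push_cast
    field_simp
  rw [h, qp_add, h_one, mul_one]

lemma qp_two_mul_quadratic_periodic {n K : ℕ} (hK : Odd K) (x c : Fin n → ℤ) (v : Fin n → ℚ)
    (hv : ∀ j, ∃ w : ℤ, Odd w ∧ 2 * v j = w) :
    qp (2 * K) (dotp (intC (x + (K : ℤ) • c)) (intC (x + (K : ℤ) • c))
        + 2 * dotp (intC (x + (K : ℤ) • c)) v)
      = qp (2 * K) (dotp (intC x) (intC x) + 2 * dotp (intC x) v) := by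
  choose w hw hvw using hv
  choose d hd using fun j =>
    Int.two_dvd_mul_mul_add_of_odd (by exact_mod_cast hK : Odd (K : ℤ)) (hw j) (c j)
  refine qp_eq_of_eq_add_natCast_mul (by have := hK.pos; omega) (∑ j, (c j * x j + d j)) ?_
  simp only [dotp, intC, Pi.add_apply, Pi.smul_apply, smul_eq_mul]
  push_cast
  simp only [mul_sum, ← sum_add_distrib]
  refine sum_congr rfl fun j _ => ?_
  have hdj : (c j : ℚ) * (K * c j + w j) = 2 * d j := by exact_mod_cast hd j
  linear_combination (K * c j : ℚ) * hvw j + K * hdj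

lemma exists_odd_two_mul_Wact {n : ℕ} (σ : HypOct n) (mu : Fin n → ℤ) (j : Fin n) :
    ∃ w : ℤ, Odd w ∧ 2 * Wact σ (intC mu + rhoV n) j = w := by
  refine ⟨σ.2 j * (2 * (mu (σ.1⁻¹ j) + n - (σ.1⁻¹ j : ℕ) - 1) + 1),
    Int.odd_mul.mpr ⟨?_, odd_two_mul_add_one _⟩, ?_⟩
  · rcases Int.units_eq_one_or (σ.2 j) with h | h <;> simp [h]
  simp only [Wact, intC, rhoV, Pi.add_apply]
  push_cast
  ring

noncomputable def sumXSTerm (n N : ℕ) (mu lam : Fin n → ℤ) : ℂ :=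
  qp N (dotp (intC lam) (intC lam)) * Sprime n N (intC lam) (intC mu)

lemma sumXS_eq_sum_sumXSTerm (n N M : ℕ) (mu : Fin n → ℤ) :
    sumXS n N M mu = ∑ lam : Fin n → Fin M, sumXSTerm n N mu (fun j => lam j) := by
  have h_cast : ∀ lam : Fin n → Fin M, intC (fun j => (lam j : ℤ)) = finC lam :=
    fun lam => funext fun j => by simp [intC, finC]
  simp only [sumXS, sumXSTerm, h_cast]

lemma sumXSTerm_add_smul {n K : ℕ} (hK : Odd K) (mu lam c : Fin n → ℤ) :
    sumXSTerm n (2 * K) mu (lam + (K : ℤ) • c) = sumXSTerm n (2 * K) mu lam := by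
  simp only [sumXSTerm, Sprime, mul_sum]
  refine sum_congr rfl fun σ _ => ?_
  set v := Wact σ (intC mu + rhoV n)
  have split : ∀ z : Fin n → ℚ,
      qp (2 * K) (dotp z z) * (epsW σ * qp (2 * K) (2 * dotp (z + rhoV n) v))
        = epsW σ * qp (2 * K) (2 * dotp (rhoV n) v) * qp (2 * K) (dotp z z + 2 * dotp z v) := by
    intro z
    rw [mul_left_comm, mul_assoc, ← qp_add, ← qp_add]
    congr 2
    simp only [dotp, Pi.add_apply, add_mul, sum_add_distrib]
    ring
  rw [split, split, qp_two_mul_quadratic_periodic hK lam c v (exists_odd_two_mul_Wact σ mu)]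

theorem sumXS_halving_general (n N : ℕ) (hN4 : N % 4 = 2)
    (mu : Fin n → ℤ) :
    sumXS n N N mu = 2 ^ n * sumXS n N (N / 2) mu := by
  obtain ⟨K, rfl, hK⟩ : ∃ K, N = 2 * K ∧ Odd K := ⟨N / 2, by omega, by rw [Nat.odd_iff]; omega⟩
  rw [Nat.mul_div_cancel_left K two_pos, sumXS_eq_sum_sumXSTerm, sumXS_eq_sum_sumXSTerm,
    Fintype.sum_pi_fin_mul_eq_pow_smul 2 K _ (sumXSTerm_add_smul hK mu), nsmul_eq_mul]
  norm_num

/-- For `n ≥ 1`, `N ≡ 2 (mod 4)` with `N ≥ 6`, and `μ ∈ ℤ^n`,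
`Σ_{λ∈X_N} q^{(λ,λ)} S'_{λ,μ} = 2^n · Σ_{λ∈X_{N/2}} q^{(λ,λ)} S'_{λ,μ}`
(with `q^r = exp(2πi r/N)` throughout). -/
theorem sumXS_halving (n N : ℕ) (hn : 1 ≤ n) (hN : 6 ≤ N) (hN4 : N % 4 = 2)
    (mu : Fin n → ℤ) :
    sumXS n N N mu = 2 ^ n * sumXS n N (N / 2) mu :=
  sumXS_halving_general n N hN4 mu
end
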